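/- Fix N ≥ 1, a threshold θ ∈ ℝ, and sequences γ_k(t) ∈ (0,1) and J_k(t) ∈ ℝ for k ∈ {1,…,N}, t ∈ ℕ. Let V and V′ be two trajectories of the recursion V_k(t+1) = γ_k(t)(1 − Z(V_k(t)))V_k(t) + J_k(t) (with the same sequences γ_k, J_k) having the same raster plot up to time t, i.e. Z(V_k(s)) = Z(V′_k(s)) =: ω_k(s) for all k and all 0 ≤ s ≤ t. Then max_{1≤k≤N} |V_k(t+1) − V′_k(t+1)| ≤ (max_{1≤k≤N} σ_k(t)) · max_{1≤k≤N} |V_k(0) − V′_k(0)|, where σ_k(t) = ∏_{s=0}^{t} γ_k(s)(1 − ω_k(s)) and max_k σ_k(t) < 1; in particular the time-(t+1) flow strictly contracts the sup-norm distance between initial conditions sharing the same raster plot up to time t. -/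
import Mathlib


/-- `Z θ x = 1` if `x ≥ θ` (firing) and `0` otherwise. -/
noncomputable def Z (θ x : ℝ) : ℝ := if θ ≤ x then 1 else 0

lemma Z_factor_bounds (θ x g : ℝ) (hg0 : 0 < g) (hg1 : g < 1) :
    0 ≤ g * (1 - Z θ x) ∧ g * (1 - Z θ x) < 1 := by
  unfold Z
  split <;> constructor <;> nlinarith

lemma prod_lt_one_aux (f : ℕ → ℝ) (h : ∀ s, 0 ≤ f s ∧ f s < 1) :
    ∀ n, ∏ s ∈ Finset.range (n + 1), f s < 1 := by
  intro n
  induction n with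
  | zero => simpa using (h 0).2
  | succ n ih =>
      rw [Finset.prod_range_succ]
      have h0 : 0 ≤ ∏ s ∈ Finset.range (n + 1), f s :=
        Finset.prod_nonneg (fun s _ => (h s).1)
      nlinarith [(h (n + 1)).1, (h (n + 1)).2]

/-- Corollary 2: the time-`(t+1)` flow of the discrete-time Integrate-and-Fire
network strictly contracts the sup-norm distance between two initial conditions
sharing the same raster plot up to time `t`, with contraction rate
`max_k σ_k(t) < 1`, where `σ_k(t) = ∏_{s=0}^{t} γ_k(s)(1-ω_k(s))`. -/
theorem IF_flow_supnorm_contraction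
    (N : ℕ) (hN : 1 ≤ N) (θ : ℝ)
    (γ J : ℕ → Fin N → ℝ)
    (hγ : ∀ t k, 0 < γ t k ∧ γ t k < 1)
    (V V' : ℕ → Fin N → ℝ)
    (hrec : ∀ t k, V (t + 1) k =
      γ t k * (1 - Z θ (V t k)) * V t k + J t k)
    (hrec' : ∀ t k, V' (t + 1) k =
      γ t k * (1 - Z θ (V' t k)) * V' t k + J t k)
    (t : ℕ)
    (hraster : ∀ k, ∀ s ≤ t, Z θ (V s k) = Z θ (V' s k)) :
    (⨆ k : Fin N, |V (t + 1) k - V' (t + 1) k|) ≤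
        (⨆ k : Fin N, ∏ s ∈ Finset.range (t + 1), γ s k * (1 - Z θ (V s k)))
          * ⨆ k : Fin N, |V 0 k - V' 0 k|
    ∧ (⨆ k : Fin N, ∏ s ∈ Finset.range (t + 1), γ s k * (1 - Z θ (V s k))) < 1 := by
  haveI : Nonempty (Fin N) := ⟨⟨0, hN⟩⟩
  set σ : Fin N → ℝ := fun k => ∏ s ∈ Finset.range (t + 1), γ s k * (1 - Z θ (V s k))
    with hσ
  -- factor bounds
  have hfac : ∀ s k, 0 ≤ γ s k * (1 - Z θ (V s k)) ∧ γ s k * (1 - Z θ (V s k)) < 1 :=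
    fun s k => Z_factor_bounds θ (V s k) (γ s k) (hγ s k).1 (hγ s k).2
  have hσ0 : ∀ k, 0 ≤ σ k := fun k =>
    Finset.prod_nonneg (fun s _ => (hfac s k).1)
  have hσ1 : ∀ k, σ k < 1 := fun k =>
    prod_lt_one_aux (fun s => γ s k * (1 - Z θ (V s k))) (fun s => hfac s k) t
  -- key identity
  have key : ∀ u, u ≤ t → ∀ k, V (u + 1) k - V' (u + 1) k =
      (∏ s ∈ Finset.range (u + 1), γ s k * (1 - Z θ (V s k))) * (V 0 k - V' 0 k) := by
    intro u hu
    induction u with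
    | zero =>
        intro k
        rw [hrec 0 k, hrec' 0 k, ← hraster k 0 (Nat.zero_le t)]
        simp [Finset.prod_range_succ]
        ring
    | succ n ih =>
        intro k
        have hn : n ≤ t := Nat.le_of_succ_le hu
        rw [hrec (n+1) k, hrec' (n+1) k, ← hraster k (n+1) hu]
        have h2 := ih hn k
        rw [Finset.prod_range_succ]
        linear_combination (γ (n + 1) k * (1 - Z θ (V (n + 1) k))) * h2
  -- sup bounds
  have hbdd : ∀ f : Fin N → ℝ, BddAbove (Set.range f) := fun f =>
    (Set.finite_range f).bddAbove
  have hd0 : ∀ k, |V 0 k - V' 0 k| ≤ ⨆ k, |V 0 k - V' 0 k| :=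
    fun k => le_ciSup (f := fun k => |V 0 k - V' 0 k|) (hbdd _) k
  have hsupd0 : 0 ≤ ⨆ k, |V 0 k - V' 0 k| :=
    le_trans (abs_nonneg _) (hd0 (Classical.arbitrary _))
  have hσle : ∀ k, σ k ≤ ⨆ k, σ k := fun k => le_ciSup (f := σ) (hbdd _) k
  constructor
  · apply ciSup_le
    intro k
    have h1 : |V (t + 1) k - V' (t + 1) k| = σ k * |V 0 k - V' 0 k| := by
      rw [key t le_rfl k, abs_mul, abs_of_nonneg (hσ0 k)]
    rw [h1]
    exact mul_le_mul (hσle k) (hd0 k) (abs_nonneg _) (le_trans (hσ0 k) (hσle k))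
  · obtain ⟨k0, hk0⟩ := Finite.exists_max σ
    exact lt_of_le_of_lt (ciSup_le hk0) (hσ1 k0)
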